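/- The off-resonant exponential-profile excitation amplitude A(t) = (4κα Γ²/((1−α)²Γ² + 4Δ₀²))(e^{−Γt} − 2e^{−(1+α)Γt/2} cos(Δ₀ t) + e^{−αΓt}), viewed as a function of (α, Δ₀, t) with κ ∈ (0,1] and Γ > 0 fixed, satisfies A(α, Δ₀, t) ≤ 4κ/e² for all α > 0 (α ≠ 1), all Δ₀ ∈ ℝ, and all t ≥ 0, and the supremum 4κ/e² is approached as α → 1, Δ₀ → 0, t → 2/Γ. -/

import Mathlib

/-!
Put `x = Γt/2` and `θ = Δt`. Completing the square,
`A = 4καΓ² / ((1-α)²Γ² + 4Δ²) · ((e^{-x} - e^{-αx})² + 2e^{-(1+α)x}(1 - cos θ))`,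
so `A ≤ 4κM` follows from `α(e^{-x} - e^{-αx})² ≤ (1-α)²M` and
`αΓ² · 2e^{-(1+α)x}(1 - cos θ) ≤ 4Δ²M`, and likewise with all inequalities reversed.

For `M = e^{-2}`: the map `u ↦ exp (-eᵘ)` is `e^{-1}`-Lipschitz, so
`α(e^{-x} - e^{-αx})² ≤ α log² α · e^{-2} ≤ (1-α)² e^{-2}`; and `1 - cos θ ≤ θ²/2`,
`Γ²θ² = 4Δ²x²`, `4α ≤ (1+α)²` and `y e^{-y} ≤ e^{-1}` give the second bound.

For the limit, convexity of `exp` and the quartic Taylor bound for `cos` give the reversed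
inequalities near `(1, 0, 2/Γ)` with a continuous `M`, i.e. a continuous minorant of `A` whose
value there is `4κ/e²`.
-/

open Real Filter

noncomputable def Aoff (Γ κ : ℝ) (α Δ t : ℝ) : ℝ :=
  (4 * κ * α * Γ ^ 2 / ((1 - α) ^ 2 * Γ ^ 2 + 4 * Δ ^ 2)) *
    (Real.exp (-Γ * t) - 2 * Real.exp (-(1 + α) * Γ * t / 2) * Real.cos (Δ * t) +
      Real.exp (-α * Γ * t))

theorem exp_neg_one_sq : exp (-1) ^ 2 = exp (-2) := by
  rw [← exp_nat_mul]; norm_num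

theorem abs_exp_neg_exp_sub_exp_neg_exp_le (u v : ℝ) :
    |exp (-exp u) - exp (-exp v)| ≤ exp (-1) * |u - v| := by
  have hderiv (w : ℝ) : HasDerivAt (fun w => exp (-exp w)) (exp (-exp w) * -exp w) w :=
    (hasDerivAt_exp w).neg.exp
  have hbound (w : ℝ) : ‖exp (-exp w) * -exp w‖ ≤ exp (-1) := by
    rw [norm_mul, norm_neg, Real.norm_of_nonneg (exp_pos _).le,
      Real.norm_of_nonneg (exp_pos _).le, mul_comm]
    exact mul_exp_neg_le_exp_neg_one _
  exact convex_univ.norm_image_sub_le_of_norm_hasDerivWithin_le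
    (fun w _ => (hderiv w).hasDerivWithinAt) (fun w _ => hbound w)
    (Set.mem_univ v) (Set.mem_univ u)

theorem mul_log_sq_le_one_sub_sq {s : ℝ} (hs : 0 < s) : s * log s ^ 2 ≤ (1 - s) ^ 2 := by
  -- writing `s = exp (2 * y)`, this is `y ^ 2 ≤ sinh y ^ 2`
  set y := log s / 2
  have hs_eq : s = exp y ^ 2 := by
    rw [sq, ← exp_add, show y + y = log s by ring, exp_log hs]
  have hsinh : y ^ 2 ≤ sinh y ^ 2 := by
    rcases le_total 0 y with hy | hy
    · exact pow_le_pow_left₀ hy (self_le_sinh_iff.2 hy) 2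
    · nlinarith [sinh_le_self_iff.2 hy]
  have hid : (1 - s) ^ 2 = 4 * s * sinh y ^ 2 := by
    rw [hs_eq, sinh_eq, exp_neg]
    field_simp
    ring
  rw [hid, show log s = 2 * y by ring]
  nlinarith [mul_le_mul_of_nonneg_left hsinh hs.le]

theorem mul_sq_exp_neg_sub_exp_neg_le {s x : ℝ} (hs : 0 < s) (hx : 0 ≤ x) :
    s * (exp (-x) - exp (-(s * x))) ^ 2 ≤ (1 - s) ^ 2 * exp (-2) := by
  have hgap : (exp (-x) - exp (-(s * x))) ^ 2 ≤ exp (-1) ^ 2 * log s ^ 2 := by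
    rcases hx.eq_or_lt with rfl | hx
    · rw [mul_zero, sub_self, zero_pow two_ne_zero]
      positivity
    have h := abs_exp_neg_exp_sub_exp_neg_exp_le (log x) (log s + log x)
    have hsx : exp (log s + log x) = s * x := by rw [exp_add, exp_log hs, exp_log hx]
    rw [exp_log hx, hsx, show log x - (log s + log x) = -log s by ring, abs_neg] at h
    calc (exp (-x) - exp (-(s * x))) ^ 2 = |exp (-x) - exp (-(s * x))| ^ 2 := (sq_abs _).symm
      _ ≤ (exp (-1) * |log s|) ^ 2 := pow_le_pow_left₀ (abs_nonneg _) h 2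
      _ = exp (-1) ^ 2 * log s ^ 2 := by rw [mul_pow, sq_abs]
  calc s * (exp (-x) - exp (-(s * x))) ^ 2 ≤ s * (exp (-1) ^ 2 * log s ^ 2) := by gcongr
    _ = s * log s ^ 2 * exp (-1) ^ 2 := by ring
    _ ≤ (1 - s) ^ 2 * exp (-1) ^ 2 := by gcongr; exact mul_log_sq_le_one_sub_sq hs
    _ = (1 - s) ^ 2 * exp (-2) := by rw [exp_neg_one_sq]

theorem mul_sq_mul_exp_neg_le {s x : ℝ} (hs : 0 ≤ s) (hx : 0 ≤ x) :
    s * x ^ 2 * exp (-((1 + s) * x)) ≤ exp (-2) := by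
  have hy : 0 ≤ (1 + s) * x / 2 * exp (-((1 + s) * x / 2)) := by positivity
  have hsq : ((1 + s) * x / 2 * exp (-((1 + s) * x / 2))) ^ 2 =
      (1 + s) ^ 2 / 4 * x ^ 2 * exp (-((1 + s) * x)) := by
    rw [mul_pow, ← exp_nat_mul]; ring_nf
  have hye : (1 + s) ^ 2 / 4 * x ^ 2 * exp (-((1 + s) * x)) ≤ exp (-2) := by
    calc _ = ((1 + s) * x / 2 * exp (-((1 + s) * x / 2))) ^ 2 := hsq.symm
      _ ≤ exp (-1) ^ 2 := pow_le_pow_left₀ hy (mul_exp_neg_le_exp_neg_one _) 2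
      _ = exp (-2) := exp_neg_one_sq
  have hAMGM : 4 * s ≤ (1 + s) ^ 2 := by nlinarith [sq_nonneg (1 - s)]
  nlinarith [mul_le_mul_of_nonneg_right hAMGM (by positivity : 0 ≤ x ^ 2 * exp (-((1 + s) * x)))]

theorem abs_sub_mul_exp_neg_max_le (a b : ℝ) :
    |a - b| * exp (-max a b) ≤ |exp (-a) - exp (-b)| := by
  wlog hab : a ≤ b generalizing a b
  · rw [abs_sub_comm, max_comm, abs_sub_comm (exp _)]
    exact this b a (le_of_not_ge hab)
  have hexp : exp (-a) = exp (b - a) * exp (-b) := by rw [← exp_add]; ring_nf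
  have hgap := add_one_le_exp (b - a)
  rw [max_eq_right hab, abs_sub_comm, abs_of_nonneg (sub_nonneg.2 hab),
    abs_of_nonneg (by rw [sub_nonneg]; exact exp_le_exp.2 (neg_le_neg hab)), hexp]
  nlinarith [exp_pos (-b)]

theorem sq_div_two_mul_le_one_sub_cos {θ : ℝ} (hθ : |θ| ≤ 1) :
    θ ^ 2 / 2 * (1 - 5 * θ ^ 2 / 48) ≤ 1 - cos θ := by
  have h := (abs_le.1 (cos_bound hθ)).2
  rw [(by decide : Even 4).pow_abs] at h
  linarith

theorem Aoff_denom_pos {Γ α : ℝ} (Δ : ℝ) (hΓ : Γ ≠ 0) (hα : α ≠ 1) :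
    0 < (1 - α) ^ 2 * Γ ^ 2 + 4 * Δ ^ 2 := by
  have := sq_pos_of_ne_zero (sub_ne_zero.2 hα.symm)
  positivity

theorem Aoff_eq (Γ κ α Δ t : ℝ) :
    Aoff Γ κ α Δ t = 4 * κ * α * Γ ^ 2 / ((1 - α) ^ 2 * Γ ^ 2 + 4 * Δ ^ 2) *
      ((exp (-(Γ * t / 2)) - exp (-(α * (Γ * t / 2)))) ^ 2 +
        2 * exp (-((1 + α) * (Γ * t / 2))) * (1 - cos (Δ * t))) := by
  have h1 : exp (-Γ * t) = exp (-(Γ * t / 2)) ^ 2 := by rw [← exp_nat_mul]; ring_nf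
  have h2 : exp (-α * Γ * t) = exp (-(α * (Γ * t / 2))) ^ 2 := by rw [← exp_nat_mul]; ring_nf
  have h3 : exp (-((1 + α) * (Γ * t / 2))) = exp (-(Γ * t / 2)) * exp (-(α * (Γ * t / 2))) := by
    rw [← exp_add]; ring_nf
  rw [Aoff, h1, h2, show -(1 + α) * Γ * t / 2 = -((1 + α) * (Γ * t / 2)) by ring, h3]
  ring

theorem Aoff_le {Γ κ α Δ t : ℝ} (hΓ : 0 < Γ) (hκ : 0 ≤ κ) (hα : 0 < α) (hα1 : α ≠ 1)
    (ht : 0 ≤ t) : Aoff Γ κ α Δ t ≤ 4 * κ / exp 2 := by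
  rw [div_eq_mul_inv _ (exp 2), ← exp_neg, Aoff_eq, div_mul_eq_mul_div,
    div_le_iff₀ (Aoff_denom_pos Δ hΓ.ne' hα1)]
  generalize hxdef : Γ * t / 2 = x
  have hx : 0 ≤ x := hxdef ▸ by positivity
  have hgap := mul_sq_exp_neg_sub_exp_neg_le hα hx
  have hcos : α * Γ ^ 2 * (2 * exp (-((1 + α) * x)) * (1 - cos (Δ * t))) ≤
      4 * Δ ^ 2 * exp (-2) := by
    calc _ = α * Γ ^ 2 * (exp (-((1 + α) * x)) * (2 * (1 - cos (Δ * t)))) := by ring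
      _ ≤ α * Γ ^ 2 * (exp (-((1 + α) * x)) * (Δ * t) ^ 2) := by
          gcongr
          linarith [one_sub_sq_div_two_le_cos (x := Δ * t)]
      _ = 4 * Δ ^ 2 * (α * x ^ 2 * exp (-((1 + α) * x))) := by rw [← hxdef]; ring
      _ ≤ 4 * Δ ^ 2 * exp (-2) := by gcongr; exact mul_sq_mul_exp_neg_le hα.le hx
  linear_combination (4 * κ) * (Γ ^ 2 * hgap + hcos)

noncomputable def AoffMinorant (Γ κ α Δ t : ℝ) : ℝ :=
  4 * κ * (α * (Γ * t / 2) ^ 2 * min (exp (-max (Γ * t / 2) (α * (Γ * t / 2))) ^ 2)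
    (exp (-((1 + α) * (Γ * t / 2))) * (1 - 5 * (Δ * t) ^ 2 / 48)))

theorem continuous_AoffMinorant (Γ κ : ℝ) :
    Continuous fun p : ℝ × ℝ × ℝ => AoffMinorant Γ κ p.1 p.2.1 p.2.2 := by
  unfold AoffMinorant
  fun_prop

theorem AoffMinorant_peak {Γ : ℝ} (κ : ℝ) (hΓ : Γ ≠ 0) :
    AoffMinorant Γ κ 1 0 (2 / Γ) = 4 * κ / exp 2 := by
  have hx : Γ * (2 / Γ) / 2 = 1 := by field_simp
  simp only [AoffMinorant, hx]
  norm_num [exp_neg_one_sq, exp_neg, div_eq_mul_inv]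

theorem AoffMinorant_le_Aoff {Γ κ α Δ t : ℝ} (hΓ : Γ ≠ 0) (hκ : 0 ≤ κ) (hα : 0 < α)
    (hα1 : α ≠ 1) (hθ : |Δ * t| ≤ 1) : AoffMinorant Γ κ α Δ t ≤ Aoff Γ κ α Δ t := by
  rw [AoffMinorant, Aoff_eq, div_mul_eq_mul_div, le_div_iff₀ (Aoff_denom_pos Δ hΓ hα1)]
  generalize hxdef : Γ * t / 2 = x
  set m := min (exp (-max x (α * x)) ^ 2) (exp (-((1 + α) * x)) * (1 - 5 * (Δ * t) ^ 2 / 48))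
  have hgap : (1 - α) ^ 2 * (x ^ 2 * m) ≤ (exp (-x) - exp (-(α * x))) ^ 2 := by
    calc _ ≤ (1 - α) ^ 2 * (x ^ 2 * exp (-max x (α * x)) ^ 2) := by
          gcongr
          exact min_le_left _ _
      _ = (|x - α * x| * exp (-max x (α * x))) ^ 2 := by rw [mul_pow, sq_abs]; ring
      _ ≤ |exp (-x) - exp (-(α * x))| ^ 2 :=
          pow_le_pow_left₀ (by positivity) (abs_sub_mul_exp_neg_max_le x (α * x)) 2
      _ = _ := sq_abs _
  have hcos : 4 * Δ ^ 2 * (x ^ 2 * m) ≤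
      Γ ^ 2 * (2 * exp (-((1 + α) * x)) * (1 - cos (Δ * t))) := by
    calc _ ≤ 4 * Δ ^ 2 * (x ^ 2 * (exp (-((1 + α) * x)) * (1 - 5 * (Δ * t) ^ 2 / 48))) := by
          gcongr
          exact min_le_right _ _
      _ = Γ ^ 2 * (2 * exp (-((1 + α) * x)) *
            ((Δ * t) ^ 2 / 2 * (1 - 5 * (Δ * t) ^ 2 / 48))) := by
          rw [← hxdef]; ring
      _ ≤ _ := by gcongr; exact sq_div_two_mul_le_one_sub_cos hθ
  linear_combination (4 * κ * α) * (Γ ^ 2 * hgap + hcos)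

theorem stmt19_general (Γ κ : ℝ) (hΓ : 0 < Γ) (hκ0 : 0 < κ) :
    (∀ α Δ t : ℝ, 0 < α → α ≠ 1 → 0 ≤ t →
        Aoff Γ κ α Δ t ≤ 4 * κ / Real.exp 2) ∧
      Tendsto (fun p : ℝ × ℝ × ℝ => Aoff Γ κ p.1 p.2.1 p.2.2)
        (nhdsWithin (1, 0, 2 / Γ) {p : ℝ × ℝ × ℝ | p.1 ≠ 1})
        (nhds (4 * κ / Real.exp 2)) := by
  refine ⟨fun α Δ t hα hα1 ht => Aoff_le hΓ hκ0.le hα hα1 ht, ?_⟩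
  set p₀ : ℝ × ℝ × ℝ := (1, 0, 2 / Γ)
  have hminorant : Tendsto (fun p : ℝ × ℝ × ℝ => AoffMinorant Γ κ p.1 p.2.1 p.2.2)
      (nhdsWithin p₀ {p | p.1 ≠ 1}) (nhds (4 * κ / exp 2)) := by
    rw [← AoffMinorant_peak κ hΓ.ne']
    exact ((continuous_AoffMinorant Γ κ).tendsto p₀).mono_left nhdsWithin_le_nhds
  have hnear : ∀ᶠ p : ℝ × ℝ × ℝ in nhdsWithin p₀ {p | p.1 ≠ 1},
      0 < p.1 ∧ p.1 ≠ 1 ∧ 0 ≤ p.2.2 ∧ |p.2.1 * p.2.2| ≤ 1 := by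
    have hα := (continuous_fst.tendsto p₀).eventually (lt_mem_nhds one_pos)
    have ht := (continuous_snd.snd.tendsto p₀).eventually (lt_mem_nhds (div_pos two_pos hΓ))
    have hθ := ((continuous_snd.fst.mul continuous_snd.snd).abs.tendsto p₀).eventually
      (eventually_le_nhds (by simp : |(0 : ℝ) * (2 / Γ)| < 1))
    filter_upwards [nhdsWithin_le_nhds hα, nhdsWithin_le_nhds ht, nhdsWithin_le_nhds hθ,
      self_mem_nhdsWithin] with p hα ht hθ hα1
    exact ⟨hα, hα1, ht.le, hθ⟩
  refine tendsto_of_tendsto_of_tendsto_of_le_of_le' hminorant tendsto_const_nhds ?_ ?_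
  · exact hnear.mono fun p ⟨hα, hα1, _, hθ⟩ => AoffMinorant_le_Aoff hΓ.ne' hκ0.le hα hα1 hθ
  · exact hnear.mono fun p ⟨hα, hα1, ht, _⟩ => Aoff_le hΓ hκ0.le hα hα1 ht

theorem stmt19 (Γ κ : ℝ) (hΓ : 0 < Γ) (hκ0 : 0 < κ) (hκ1 : κ ≤ 1) :
    (∀ α Δ t : ℝ, 0 < α → α ≠ 1 → 0 ≤ t →
        Aoff Γ κ α Δ t ≤ 4 * κ / Real.exp 2) ∧
      Tendsto (fun p : ℝ × ℝ × ℝ => Aoff Γ κ p.1 p.2.1 p.2.2)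
        (nhdsWithin (1, 0, 2 / Γ) {p : ℝ × ℝ × ℝ | p.1 ≠ 1})
        (nhds (4 * κ / Real.exp 2)) :=
  stmt19_general Γ κ hΓ hκ0
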